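/- Let P be a nonsymmetric operad with multiplication π and let δ_π(f) := −[π, f]_GV be the induced differential. Then for f ∈ P_m, g ∈ P_n, the cup bracket satisfies [f,g]_π = ι_f(δ_π g) + (-1)^{m-1} ι_{δ_π f} g + (-1)^m δ_π(ι_f g). Consequently, the induced cup product on the cohomology H_P^•(π) is graded commutative. -/

import Mathlib

/-- A nonsymmetric operad (in "arity minus one" indexing: `Q n` is the space of
operations of arity `n + 1`, i.e. the space `P_{n+1}` of the paper), given by a
collection of `k`-modules with partial compositions
`∘ᵢ : P_{m+1} × P_{n+1} → P_{m+n+1}` (here `i : Fin (m+1)` is the 0-based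
position), satisfying the sequential and parallel associativity axioms and
unit axioms.  The target degree is a free variable `p` constrained by
`m + n = p`, which avoids dependent-type casts in the axioms. -/
structure NSOperad (k : Type*) [Field k] (Q : ℕ → Type*)
    [∀ n, AddCommGroup (Q n)] [∀ n, Module k (Q n)] where
  comp : ∀ {m n p : ℕ}, m + n = p → Q m → Fin (m + 1) → Q n → Q p
  comp_add_left : ∀ {m n p : ℕ} (h : m + n = p) (f f' : Q m) (i : Fin (m + 1)) (g : Q n),
    comp h (f + f') i g = comp h f i g + comp h f' i g
  comp_add_right : ∀ {m n p : ℕ} (h : m + n = p) (f : Q m) (i : Fin (m + 1)) (g g' : Q n),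
    comp h f i (g + g') = comp h f i g + comp h f i g'
  comp_smul_left : ∀ {m n p : ℕ} (h : m + n = p) (a : k) (f : Q m) (i : Fin (m + 1)) (g : Q n),
    comp h (a • f) i g = a • comp h f i g
  comp_smul_right : ∀ {m n p : ℕ} (h : m + n = p) (a : k) (f : Q m) (i : Fin (m + 1)) (g : Q n),
    comp h f i (a • g) = a • comp h f i g
  one : Q 0
  comp_one : ∀ {m : ℕ} (f : Q m) (i : Fin (m + 1)), comp (Nat.add_zero m) f i one = f
  one_comp : ∀ {m : ℕ} (f : Q m), comp (Nat.zero_add m) one 0 f = f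
  assoc_seq : ∀ {m n l q r p : ℕ} (h0 : n + l = q) (h1 : m + q = p) (h2 : m + n = r)
    (h3 : r + l = p) (f : Q m) (g : Q n) (hh : Q l) (i : Fin (m + 1)) (j : Fin (n + 1)),
    comp h1 f i (comp h0 g j hh) =
      comp h3 (comp h2 f i g) ⟨(i : ℕ) + (j : ℕ), by have := i.isLt; have := j.isLt; omega⟩ hh
  assoc_par : ∀ {m n l r s p : ℕ} (h2 : m + n = r) (h3 : r + l = p) (h4 : m + l = s)
    (h5 : s + n = p) (f : Q m) (g : Q n) (hh : Q l) (i j : Fin (m + 1)), (i : ℕ) < (j : ℕ) →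
    comp h3 (comp h2 f i g) ⟨(j : ℕ) + n, by have := j.isLt; omega⟩ hh =
      comp h5 (comp h4 f j hh) ⟨(i : ℕ), by have := i.isLt; omega⟩ g

namespace NSOperad

variable {k : Type*} [Field k] {Q : ℕ → Type*}
  [∀ n, AddCommGroup (Q n)] [∀ n, Module k (Q n)]

/-- Transport along an equality of degrees. -/
def tr {i j : ℕ} (h : i = j) (x : Q i) : Q j := h ▸ x

variable (O : NSOperad k Q)

/-- The contraction operator `ι_g f := Σᵢ (-1)^{(i-1)(n-1)} f ∘ᵢ g`
(for `f ∈ P_{m+1}`, `g ∈ P_{n+1}` in paper degrees). -/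
def iota {m n : ℕ} (g : Q n) (f : Q m) : Q (m + n) :=
  ∑ i : Fin (m + 1), ((-1 : k) ^ ((i : ℕ) * n)) • O.comp rfl f i g

/-- `π ∈ P_2` is a multiplication if `π ∘₁ π = π ∘₂ π`. -/
def IsMult (π : Q 1) : Prop := O.comp rfl π 0 π = O.comp rfl π 1 π

/-- The Gerstenhaber–Voronov bracket `[f,g]_GV = ι_f g − (-1)^{mn} ι_g f`. -/
def gv {m n : ℕ} (f : Q m) (g : Q n) : Q (m + n) :=
  tr (by omega : n + m = m + n) (O.iota f g) - ((-1 : k) ^ (m * n)) • O.iota g f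

/-- The differential `δ_π f := −[π, f]_GV`. -/
def delta (π : Q 1) {n : ℕ} (f : Q n) : Q (n + 1) :=
  - tr (by omega : 1 + n = n + 1) (O.gv π f)

/-- The map `θ f := −ι_f π`. -/
def theta (π : Q 1) {n : ℕ} (f : Q n) : Q (n + 1) :=
  - tr (by omega : 1 + n = n + 1) (O.iota f π)

/-- The map `D f := −ι_π f`. -/
def Dop (π : Q 1) {n : ℕ} (f : Q n) : Q (n + 1) := - O.iota π f

/-- The cup product `f ∪_π g := (π ∘₂ g) ∘₁ f`. -/
def cup (π : Q 1) {m n : ℕ} (f : Q m) (g : Q n) : Q (m + n + 1) :=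
  O.comp (by omega : (1 + n) + m = m + n + 1) (O.comp rfl π 1 g) 0 f

/-- The cup bracket `[f,g]_π := f ∪_π g − (-1)^{(m+1)(n+1)} g ∪_π f`
(paper degrees `m+1`, `n+1`). -/
def cupBracket (π : Q 1) {m n : ℕ} (f : Q m) (g : Q n) : Q (m + n + 1) :=
  O.cup π f g - ((-1 : k) ^ ((m + 1) * (n + 1))) •
    tr (by omega : n + m + 1 = m + n + 1) (O.cup π g f)

/-- The Frölicher–Nijenhuis bracket
`[f,g]_FN := [f,g]_π + (-1)^{m+1} ι_{δ_π f} g − (-1)^{(m+2)(n+1)} ι_{δ_π g} f`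
(paper degrees `m+1`, `n+1`). -/
def fn (π : Q 1) {m n : ℕ} (f : Q m) (g : Q n) : Q (m + n + 1) :=
  O.cupBracket π f g
    + ((-1 : k) ^ (m + 1)) •
        tr (by omega : n + (m + 1) = m + n + 1) (O.iota (O.delta π f) g)
    - ((-1 : k) ^ ((m + 2) * (n + 1))) •
        tr (by omega : m + (n + 1) = m + n + 1) (O.iota (O.delta π g) f)

/-- The derived bracket
`[f,g]_D := [f,g]_π + ι_{θ f} g − (-1)^{(m+1)(n+1)} ι_{θ g} f`. -/
def derived (π : Q 1) {m n : ℕ} (f : Q m) (g : Q n) : Q (m + n + 1) :=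
  O.cupBracket π f g
    + tr (by omega : n + (m + 1) = m + n + 1) (O.iota (O.theta π f) g)
    - ((-1 : k) ^ ((m + 1) * (n + 1))) •
        tr (by omega : m + (n + 1) = m + n + 1) (O.iota (O.theta π g) f)

/-- The deformed element `π_S := π ∘₁ S + π ∘₂ S − S ∘₁ π` for `S ∈ P_1`. -/
def piDef (π : Q 1) (S : Q 0) : Q 1 :=
  O.comp rfl π 0 S + O.comp rfl π 1 S - O.comp rfl S 0 π

/-- `S ∈ P_1` is a Nijenhuis element for the multiplication `π`:
`(π ∘₂ S) ∘₁ S = S ∘₁ (π ∘₁ S + π ∘₂ S − S ∘₁ π)`. -/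
def IsNijenhuisFor (π : Q 1) (S : Q 0) : Prop :=
  O.comp rfl (O.comp rfl π 1 S) 0 S = O.comp rfl S 0 (O.piDef π S)

/-- Powers `N^j := N ∘₁ N^{j-1}`, `N^0 = 𝟙`. -/
def Npow (N : Q 0) : ℕ → Q 0
  | 0 => O.one
  | (j + 1) => O.comp (rfl : (0 : ℕ) + 0 = 0) N 0 (Npow N j)

/-- `R ∈ P_1` is a Rota–Baxter element of weight `lam`:
`(π ∘₂ R) ∘₁ R = R ∘₁ (π ∘₁ R + π ∘₂ R + lam π)`. -/
def IsRB (π : Q 1) (lam : k) (R : Q 0) : Prop :=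
  O.comp rfl (O.comp rfl π 1 R) 0 R =
    O.comp rfl R 0 (O.comp rfl π 0 R + O.comp rfl π 1 R + lam • π)

/-- `r ∈ P_1` is an averaging element:
`(π ∘₂ r) ∘₁ r = r ∘₁ (π ∘₁ r) = r ∘₁ (π ∘₂ r)`. -/
def IsAvg (π : Q 1) (r : Q 0) : Prop :=
  O.comp rfl (O.comp rfl π 1 r) 0 r = O.comp rfl r 0 (O.comp rfl π 0 r) ∧
  O.comp rfl (O.comp rfl π 1 r) 0 r = O.comp rfl r 0 (O.comp rfl π 1 r)

end NSOperad

/-!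
Write `x{a} := ι_a x` for the insertion of `a` into `x` at every position, and `x{a, b}` for
the insertion of `a` and `b` at positions `i < j`. Splitting the position of `b` in
`(x ∘ᵢ a) ∘ₗ b` according to whether it lies before, inside or after `a`, the two associativity
axioms give the brace relation `x{a}{b} = x{a{b}} + x{b, a} ± x{a, b}`. Expanding
`δ_π = -[π, -]_GV` in the three terms `ι_f (δ_π g)`, `ι_{δ_π f} g`, `δ_π (ι_f g)` and applying
the brace relation, everything cancels except `π{f, g}` and `π{g, f}`, which are `± f ∪_π g`
and `± g ∪_π f`. For cocycles `f` and `g` the identity then exhibits `[f, g]_π` as the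
coboundary of `± ι_f g`.
-/

namespace NSOperad

variable {k : Type*} [Field k] {Q : ℕ → Type*}

@[simp]
lemma tr_rfl {i : ℕ} (x : Q i) : tr rfl x = x := rfl

lemma tr_tr {i j l : ℕ} (h : i = j) (h' : j = l) (x : Q i) :
    tr h' (tr h x) = tr (h.trans h') x := by
  subst h; rfl

variable [∀ n, AddCommGroup (Q n)] [∀ n, Module k (Q n)]

lemma tr_add {i j : ℕ} (h : i = j) (x y : Q i) : tr h (x + y) = tr h x + tr h y := by
  subst h; rfl

lemma tr_sub {i j : ℕ} (h : i = j) (x y : Q i) : tr h (x - y) = tr h x - tr h y := by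
  subst h; rfl

lemma tr_smul {i j : ℕ} (h : i = j) (a : k) (x : Q i) : tr h (a • x) = a • tr h x := by
  subst h; rfl

lemma tr_zero {i j : ℕ} (h : i = j) : tr h (0 : Q i) = 0 := by
  subst h; rfl

lemma tr_sum {ι : Type*} (s : Finset ι) {i j : ℕ} (h : i = j) (F : ι → Q i) :
    tr h (∑ x ∈ s, F x) = ∑ x ∈ s, tr h (F x) := by
  subst h; rfl

variable (O : NSOperad k Q) {m n p : ℕ}

def compLeft (h : m + n = p) (i : Fin (m + 1)) (g : Q n) : Q m →ₗ[k] Q p where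
  toFun f := O.comp h f i g
  map_add' f f' := O.comp_add_left h f f' i g
  map_smul' a f := O.comp_smul_left h a f i g

def compRight (h : m + n = p) (f : Q m) (i : Fin (m + 1)) : Q n →ₗ[k] Q p where
  toFun g := O.comp h f i g
  map_add' g g' := O.comp_add_right h f i g g'
  map_smul' a g := O.comp_smul_right h a f i g

lemma comp_sub_left (h : m + n = p) (f f' : Q m) (i : Fin (m + 1)) (g : Q n) :
    O.comp h (f - f') i g = O.comp h f i g - O.comp h f' i g :=
  map_sub (O.compLeft h i g) f f'

lemma comp_sub_right (h : m + n = p) (f : Q m) (i : Fin (m + 1)) (g g' : Q n) :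
    O.comp h f i (g - g') = O.comp h f i g - O.comp h f i g' :=
  map_sub (O.compRight h f i) g g'

lemma tr_comp {p' : ℕ} (h : m + n = p) (e : p = p') (f : Q m) (i : Fin (m + 1))
    (g : Q n) : tr e (O.comp h f i g) = O.comp (h.trans e) f i g := by
  subst e; rfl

/-- Partial composition at a natural-number position, extended by zero outside `0, …, m`. -/
def compNat (h : m + n = p) (f : Q m) (i : ℕ) (g : Q n) : Q p :=
  if hi : i < m + 1 then O.comp h f ⟨i, hi⟩ g else 0

lemma compNat_of_lt (h : m + n = p) (f : Q m) {i : ℕ} (hi : i < m + 1) (g : Q n) :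
    O.compNat h f i g = O.comp h f ⟨i, hi⟩ g := dif_pos hi

lemma compNat_val (h : m + n = p) (f : Q m) (i : Fin (m + 1)) (g : Q n) :
    O.compNat h f i g = O.comp h f i g := dif_pos i.isLt

lemma compNat_smul_left (h : m + n = p) (a : k) (f : Q m) (i : ℕ) (g : Q n) :
    O.compNat h (a • f) i g = a • O.compNat h f i g := by
  unfold compNat; split_ifs <;> simp [O.comp_smul_left]

lemma compNat_smul_right (h : m + n = p) (a : k) (f : Q m) (i : ℕ) (g : Q n) :
    O.compNat h f i (a • g) = a • O.compNat h f i g := by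
  unfold compNat; split_ifs <;> simp [O.comp_smul_right]

lemma compNat_sum_left {ι : Type*} (s : Finset ι) (h : m + n = p) (F : ι → Q m) (i : ℕ)
    (g : Q n) : O.compNat h (∑ x ∈ s, F x) i g = ∑ x ∈ s, O.compNat h (F x) i g := by
  unfold compNat; split_ifs
  · exact map_sum (O.compLeft h _ g) F s
  · simp

lemma compNat_sum_right {ι : Type*} (s : Finset ι) (h : m + n = p) (f : Q m) (i : ℕ)
    (G : ι → Q n) : O.compNat h f i (∑ x ∈ s, G x) = ∑ x ∈ s, O.compNat h f i (G x) := by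
  unfold compNat; split_ifs
  · exact map_sum (O.compRight h f _) G s
  · simp

lemma tr_compNat {p' : ℕ} (h : m + n = p) (e : p = p') (f : Q m) (i : ℕ) (g : Q n) :
    tr e (O.compNat h f i g) = O.compNat (h.trans e) f i g := by
  subst e; rfl

lemma compNat_assoc_seq {l q r s : ℕ} (h0 : n + l = q) (h1 : m + q = s) (h2 : m + n = r)
    (h3 : r + l = s) (f : Q m) (g : Q n) (e : Q l) {i j : ℕ} (hi : i < m + 1)
    (hj : j < n + 1) :
    O.compNat h1 f i (O.compNat h0 g j e) = O.compNat h3 (O.compNat h2 f i g) (i + j) e := by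
  rw [O.compNat_of_lt _ _ hi, O.compNat_of_lt _ _ hj, O.compNat_of_lt _ _ hi,
    O.compNat_of_lt _ _ (by omega)]
  exact O.assoc_seq h0 h1 h2 h3 f g e ⟨i, hi⟩ ⟨j, hj⟩

lemma compNat_assoc_par {l r s t : ℕ} (h2 : m + n = r) (h3 : r + l = t) (h4 : m + l = s)
    (h5 : s + n = t) (f : Q m) (g : Q n) (e : Q l) {i j : ℕ} (hij : i < j) (hj : j < m + 1) :
    O.compNat h3 (O.compNat h2 f i g) (j + n) e = O.compNat h5 (O.compNat h4 f j e) i g := by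
  rw [O.compNat_of_lt _ _ (hij.trans hj), O.compNat_of_lt _ _ hj, O.compNat_of_lt _ _ (by omega),
    O.compNat_of_lt _ _ (by omega)]
  exact O.assoc_par h2 h3 h4 h5 f g e ⟨i, by omega⟩ ⟨j, hj⟩ hij

lemma iota_eq_sum_range (g : Q n) (f : Q m) :
    O.iota g f = ∑ i ∈ Finset.range (m + 1), ((-1 : k) ^ (i * n)) • O.compNat rfl f i g := by
  rw [iota, ← Fin.sum_univ_eq_sum_range (fun i => ((-1 : k) ^ (i * n)) • O.compNat rfl f i g)]
  simp only [compNat_val]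

lemma iota_smul_left (a : k) (g : Q n) (f : Q m) : O.iota (a • g) f = a • O.iota g f := by
  simp only [iota, O.comp_smul_right, Finset.smul_sum, smul_comm a]

lemma iota_smul_right (a : k) (g : Q n) (f : Q m) : O.iota g (a • f) = a • O.iota g f := by
  simp only [iota, O.comp_smul_left, Finset.smul_sum, smul_comm a]

lemma iota_zero_left (f : Q m) : O.iota (0 : Q n) f = 0 := by
  simpa using O.iota_smul_left (0 : k) 0 f

lemma iota_zero_right (g : Q n) : O.iota g (0 : Q m) = 0 := by
  simpa using O.iota_smul_right (0 : k) g 0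

lemma iota_sub_left (g g' : Q n) (f : Q m) : O.iota (g - g') f = O.iota g f - O.iota g' f := by
  simp only [iota, O.comp_sub_right, smul_sub, Finset.sum_sub_distrib]

lemma iota_sub_right (g : Q n) (f f' : Q m) : O.iota g (f - f') = O.iota g f - O.iota g f' := by
  simp only [iota, O.comp_sub_left, smul_sub, Finset.sum_sub_distrib]

lemma iota_tr_left {n' : ℕ} (e : n = n') (g : Q n) (f : Q m) :
    O.iota (tr e g) f = tr (by omega) (O.iota g f) := by
  subst e; rfl

lemma iota_tr_right {m' : ℕ} (e : m = m') (g : Q n) (f : Q m) :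
    O.iota g (tr e f) = tr (by omega) (O.iota g f) := by
  subst e; rfl

/-- The two-argument brace `x{a, b}`: `a` and `b` are inserted into `x` at positions `i < j`. -/
def brace2 (x : Q p) (a : Q m) (b : Q n) : Q (p + n + m) :=
  ∑ j ∈ Finset.range (p + 1), ∑ i ∈ Finset.range j,
    ((-1 : k) ^ (i * m + j * n)) • O.compNat rfl (O.compNat rfl x j b) i a

/-- Inserting `b` into `x ∘ᵢ a` at position `l`: before `a` (`l < i`), inside `a`
(`i ≤ l ≤ i + m`), or after `a` (`l = j + m` with `i < j`). -/
lemma sum_compNat_compNat_split (x : Q p) (a : Q m) (b : Q n) {i : ℕ} (hi : i < p + 1) :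
    ∑ l ∈ Finset.range (p + m + 1),
        ((-1 : k) ^ (l * n)) • O.compNat rfl (O.compNat rfl x i a) l b =
      ∑ l ∈ Finset.range i, ((-1 : k) ^ (l * n)) • O.compNat rfl (O.compNat rfl x i a) l b
      + ∑ j ∈ Finset.range (m + 1),
          ((-1 : k) ^ ((i + j) * n)) • O.compNat (by omega) x i (O.compNat rfl a j b)
      + ∑ j ∈ Finset.Ico (i + 1) (p + 1),
          ((-1 : k) ^ ((j + m) * n)) • O.compNat (by omega) (O.compNat rfl x j b) i a := by
  rw [← Finset.sum_range_add_sum_Ico _ (show i ≤ p + m + 1 by omega),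
    ← Finset.sum_Ico_consecutive _ (show i ≤ i + m + 1 by omega)
      (show i + m + 1 ≤ p + m + 1 by omega),
    Finset.sum_Ico_eq_sum_range, show i + m + 1 - i = m + 1 by omega, ← add_assoc]
  congr 1
  · congr 1
    refine Finset.sum_congr rfl fun j hj => ?_
    rw [O.compNat_assoc_seq rfl (by omega) rfl rfl x a b hi (Finset.mem_range.1 hj)]
  · rw [show i + m + 1 = i + 1 + m by omega, show p + m + 1 = p + 1 + m by omega,
      ← Finset.sum_Ico_add']
    refine Finset.sum_congr rfl fun j hj => ?_
    rw [Finset.mem_Ico] at hj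
    rw [O.compNat_assoc_par rfl rfl rfl (by omega) x a b (by omega) hj.2]

/-- The brace relation `x{a}{b} = x{a{b}} + x{b, a} + (-1)^{mn} x{a, b}`. -/
theorem iota_iota (x : Q p) (a : Q m) (b : Q n) :
    O.iota b (O.iota a x) =
      tr (by omega) (O.iota (O.iota b a) x) + O.brace2 x b a
        + ((-1 : k) ^ (m * n)) • tr (by omega) (O.brace2 x a b) := by
  have hsplit : O.iota b (O.iota a x) = ∑ i ∈ Finset.range (p + 1), ((-1 : k) ^ (i * m)) •
      ∑ l ∈ Finset.range (p + m + 1),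
        ((-1 : k) ^ (l * n)) • O.compNat rfl (O.compNat rfl x i a) l b := by
    simp only [iota_eq_sum_range, O.compNat_sum_left, O.compNat_smul_left, Finset.smul_sum,
      smul_comm ((-1 : k) ^ (_ * m))]
    exact Finset.sum_comm
  rw [hsplit, Finset.sum_congr rfl fun i hi => by
    rw [O.sum_compNat_compNat_split x a b (Finset.mem_range.1 hi)]]
  simp only [smul_add, Finset.sum_add_distrib, brace2, iota_eq_sum_range, O.compNat_sum_right,
    O.compNat_smul_right, tr_sum, tr_smul, O.tr_compNat, Finset.smul_sum, smul_smul, ← pow_add]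
  rw [add_comm (Finset.sum _ _) (Finset.sum _ _), Finset.range_eq_Ico,
    Finset.sum_Ico_Ico_comm']
  simp only [Nat.Ico_zero_eq_range]
  refine congrArg₂ _ (congrArg₂ _ ?_ ?_) ?_ <;>
    refine Finset.sum_congr rfl fun j _ => Finset.sum_congr rfl fun i _ => ?_ <;>
    congr 2 <;> ring

lemma tr_brace2_eq_cup {r : ℕ} (e : 1 + n + m = r) (π : Q 1) (f : Q m) (g : Q n) :
    tr e (O.brace2 π f g) = ((-1 : k) ^ n) • tr (by omega) (O.cup π f g) := by
  simp [brace2, Finset.sum_range_succ, cup, tr_smul, O.tr_comp, O.compNat_of_lt]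

lemma delta_eq (π : Q 1) (f : Q n) :
    O.delta π f = ((-1 : k) ^ n) • tr (by omega) (O.iota f π) - O.iota π f := by
  simp only [delta, gv, one_mul, tr_sub, tr_tr, tr_rfl, tr_smul, neg_sub]

lemma delta_smul (π : Q 1) (a : k) (f : Q n) : O.delta π (a • f) = a • O.delta π f := by
  simp only [delta_eq, O.iota_smul_left, O.iota_smul_right, tr_smul, smul_sub, smul_comm a]

lemma delta_tr (π : Q 1) {n' : ℕ} (e : n = n') (f : Q n) :
    O.delta π (tr e f) = tr (by omega) (O.delta π f) := by
  subst e; rfl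

theorem cupBracket_eq_iota_delta (π : Q 1) (f : Q m) (g : Q n) :
    O.cupBracket π f g =
      tr (by ring) (O.iota f (O.delta π g)) +
        ((-1 : k) ^ m) • tr (by ring) (O.iota (O.delta π f) g) +
        ((-1 : k) ^ (m + 1)) • tr (by ring) (O.delta π (O.iota f g)) := by
  simp only [delta_eq, O.iota_sub_left, O.iota_sub_right, O.iota_smul_left, O.iota_smul_right,
    O.iota_tr_left, O.iota_tr_right, O.iota_iota, tr_add, tr_sub, tr_smul, tr_tr, smul_add,
    smul_sub, smul_smul, ← pow_add]
  rw [cupBracket, O.tr_brace2_eq_cup, O.tr_brace2_eq_cup]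
  simp only [tr_rfl, smul_smul, ← pow_add]
  match_scalars <;> by_cases hm : Even m <;> by_cases hn : Even n <;>
    simp [neg_one_pow_eq_ite, parity_simps, hm, hn]

end NSOperad

open NSOperad

theorem cup_bracket_via_delta_and_cohomology_comm {k : Type*} [Field k] {Q : ℕ → Type*}
    [∀ n, AddCommGroup (Q n)] [∀ n, Module k (Q n)] (O : NSOperad k Q)
    (π : Q 1) {m n : ℕ} (f : Q m) (g : Q n) :
    (O.cupBracket π f g =
      tr (by omega : n + 1 + m = m + n + 1) (O.iota f (O.delta π g)) +
        ((-1 : k) ^ m) • tr (by omega : n + (m + 1) = m + n + 1) (O.iota (O.delta π f) g) +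
        ((-1 : k) ^ (m + 1)) •
          tr (by omega : n + m + 1 = m + n + 1) (O.delta π (O.iota f g))) ∧
    (O.delta π f = 0 → O.delta π g = 0 →
      ∃ h : Q (m + n), O.delta π h = O.cupBracket π f g) := by
  refine ⟨O.cupBracket_eq_iota_delta π f g, fun hf hg => ?_⟩
  refine ⟨((-1 : k) ^ (m + 1)) • tr (by omega) (O.iota f g), ?_⟩
  rw [O.delta_smul, O.delta_tr, O.cupBracket_eq_iota_delta, hf, hg, O.iota_zero_left,
    O.iota_zero_right, tr_zero, tr_zero, smul_zero, zero_add, zero_add]
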